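/- Let G be a finite simple graph, r < s positive integers, k ≤ k' positive integers, 𝒮 a k-(r,s)-nucleus of G and 𝒮' a k'-(r,s)-nucleus of G. If there exists an r-clique R with R ∈ K_r(𝒮) ∩ K_r(𝒮'), then 𝒮' ⊆ 𝒮. In particular, two distinct k-(r,s)-nuclei of G (for the same k) share no r-clique: K_r(𝒮) ∩ K_r(𝒮') = ∅. -/

import Mathlib

variable {V : Type*} [Fintype V] [DecidableEq V]

/-- `𝒮` is a set of `s`-cliques of the graph `G`. -/
def CliqueSet (G : SimpleGraph V) (s : ℕ) (𝒮 : Finset (Finset V)) : Prop :=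
  ∀ S ∈ 𝒮, G.IsNClique s S

/-- `R ∈ K_r(𝒮)`: `R` is an `r`-clique of `G` contained in some member of `𝒮`. -/
def InKr (G : SimpleGraph V) (r : ℕ) (𝒮 : Finset (Finset V)) (R : Finset V) : Prop :=
  G.IsNClique r R ∧ ∃ S ∈ 𝒮, R ⊆ S

/-- The `𝒮`-degree of `R`: the number of members of `𝒮` containing `R`. -/
def SDeg (𝒮 : Finset (Finset V)) (R : Finset V) : ℕ :=
  (𝒮.filter fun S => R ⊆ S).card

/-- One step of `𝒮`-connectivity: both `R` and `R'` are in `K_r(𝒮)` and some member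
of `𝒮` contains `R ∪ R'`. -/
def Step (G : SimpleGraph V) (r : ℕ) (𝒮 : Finset (Finset V)) (R R' : Finset V) : Prop :=
  InKr G r 𝒮 R ∧ InKr G r 𝒮 R' ∧ ∃ S ∈ 𝒮, R ∪ R' ⊆ S

/-- `R` and `R'` are `𝒮`-connected: there is a sequence of members of `K_r(𝒮)` from `R`
to `R'` in which each consecutive pair is contained in a common member of `𝒮`. -/
def SConnected (G : SimpleGraph V) (r : ℕ) (𝒮 : Finset (Finset V)) (R R' : Finset V) : Prop :=
  Relation.ReflTransGen (Step G r 𝒮) R R'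

/-- The degree condition at level `k`: every `R ∈ K_r(𝒮)` has `𝒮`-degree at least `k`. -/
def DegCond (G : SimpleGraph V) (r k : ℕ) (𝒮 : Finset (Finset V)) : Prop :=
  ∀ R, InKr G r 𝒮 R → k ≤ SDeg 𝒮 R

/-- The connectivity condition: every two members of `K_r(𝒮)` are `𝒮`-connected. -/
def ConnCond (G : SimpleGraph V) (r : ℕ) (𝒮 : Finset (Finset V)) : Prop :=
  ∀ R R', InKr G r 𝒮 R → InKr G r 𝒮 R' → SConnected G r 𝒮 R R'

/-- `𝒮` satisfies all the (non-maximality) conditions of a `k`-`(r,s)`-nucleus. -/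
def NucleusPre (G : SimpleGraph V) (r s k : ℕ) (𝒮 : Finset (Finset V)) : Prop :=
  CliqueSet G s 𝒮 ∧ DegCond G r k 𝒮 ∧ ConnCond G r 𝒮

/-- `𝒮` is a `k`-`(r,s)`-nucleus of `G`: a set of `s`-cliques, maximal under inclusion,
satisfying the degree condition at level `k` and the connectivity condition. -/
def IsNucleus (G : SimpleGraph V) (r s k : ℕ) (𝒮 : Finset (Finset V)) : Prop :=
  NucleusPre G r s k 𝒮 ∧ ∀ 𝒯, NucleusPre G r s k 𝒯 → 𝒮 ⊆ 𝒯 → 𝒯 = 𝒮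

/-! If a `k`-nucleus `𝒮` and a `k'`-nucleus `𝒮'` (`k ≤ k'`) share an `r`-clique `R₀`, then
`𝒮 ∪ 𝒮'` still satisfies the conditions at level `k`: degrees only grow in a superset, and every
`r`-clique of the union is connected to `R₀` inside the nucleus it comes from. Maximality of `𝒮`
forces `𝒮 ∪ 𝒮' = 𝒮`. -/

section

omit [Fintype V]

variable {G : SimpleGraph V} {r s k k' : ℕ} {𝒮 𝒯 : Finset (Finset V)} {R R' : Finset V}

omit [DecidableEq V] in
lemma InKr.mono (h : 𝒮 ⊆ 𝒯) (hR : InKr G r 𝒮 R) : InKr G r 𝒯 R :=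
  ⟨hR.1, hR.2.imp fun _ hS => ⟨h hS.1, hS.2⟩⟩

lemma inKr_union : InKr G r (𝒮 ∪ 𝒯) R ↔ InKr G r 𝒮 R ∨ InKr G r 𝒯 R := by
  simp only [InKr, Finset.mem_union, or_and_right, exists_or, and_or_left]

lemma Step.mono (h : 𝒮 ⊆ 𝒯) (hR : Step G r 𝒮 R R') : Step G r 𝒯 R R' :=
  ⟨hR.1.mono h, hR.2.1.mono h, hR.2.2.imp fun _ hS => ⟨h hS.1, hS.2⟩⟩

lemma Step.symm (hR : Step G r 𝒮 R R') : Step G r 𝒮 R' R :=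
  ⟨hR.2.1, hR.1, Finset.union_comm R R' ▸ hR.2.2⟩

lemma SConnected.mono (h : 𝒮 ⊆ 𝒯) (hR : SConnected G r 𝒮 R R') : SConnected G r 𝒯 R R' :=
  Relation.ReflTransGen.mono (fun _ _ hstep => hstep.mono h) _ _ hR

lemma SConnected.symm (hR : SConnected G r 𝒮 R R') : SConnected G r 𝒮 R' R :=
  Relation.ReflTransGen.mono (fun _ _ => Step.symm) _ _ (Relation.ReflTransGen.swap _ _ hR)

lemma SDeg.mono (h : 𝒮 ⊆ 𝒯) (R : Finset V) : SDeg 𝒮 R ≤ SDeg 𝒯 R :=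
  Finset.card_le_card (Finset.filter_subset_filter _ h)

lemma CliqueSet.union (h𝒮 : CliqueSet G s 𝒮) (h𝒯 : CliqueSet G s 𝒯) :
    CliqueSet G s (𝒮 ∪ 𝒯) := by
  intro S hS
  rcases Finset.mem_union.1 hS with hS | hS
  exacts [h𝒮 S hS, h𝒯 S hS]

lemma DegCond.anti (hkk' : k ≤ k') (h : DegCond G r k' 𝒮) : DegCond G r k 𝒮 :=
  fun R hR => hkk'.trans (h R hR)

lemma DegCond.union (h𝒮 : DegCond G r k 𝒮) (h𝒯 : DegCond G r k 𝒯) :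
    DegCond G r k (𝒮 ∪ 𝒯) := by
  intro R hR
  rcases inKr_union.1 hR with hR | hR
  · exact (h𝒮 R hR).trans (SDeg.mono Finset.subset_union_left R)
  · exact (h𝒯 R hR).trans (SDeg.mono Finset.subset_union_right R)

lemma ConnCond.union {R₀ : Finset V} (h𝒮 : ConnCond G r 𝒮) (h𝒯 : ConnCond G r 𝒯)
    (hR₀𝒮 : InKr G r 𝒮 R₀) (hR₀𝒯 : InKr G r 𝒯 R₀) : ConnCond G r (𝒮 ∪ 𝒯) := by
  have to_R₀ : ∀ R, InKr G r (𝒮 ∪ 𝒯) R → SConnected G r (𝒮 ∪ 𝒯) R R₀ := fun R hR =>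
    (inKr_union.1 hR).elim
      (fun hR => (h𝒮 R R₀ hR hR₀𝒮).mono Finset.subset_union_left)
      (fun hR => (h𝒯 R R₀ hR hR₀𝒯).mono Finset.subset_union_right)
  exact fun R R' hR hR' => (to_R₀ R hR).trans (to_R₀ R' hR').symm

lemma NucleusPre.union {R₀ : Finset V} (hkk' : k ≤ k') (h𝒮 : NucleusPre G r s k 𝒮)
    (h𝒯 : NucleusPre G r s k' 𝒯) (hR₀𝒮 : InKr G r 𝒮 R₀) (hR₀𝒯 : InKr G r 𝒯 R₀) :
    NucleusPre G r s k (𝒮 ∪ 𝒯) :=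
  ⟨h𝒮.1.union h𝒯.1, h𝒮.2.1.union (h𝒯.2.1.anti hkk'), h𝒮.2.2.union h𝒯.2.2 hR₀𝒮 hR₀𝒯⟩

lemma IsNucleus.subset_of_inKr {R₀ : Finset V} (hkk' : k ≤ k') (h𝒮 : IsNucleus G r s k 𝒮)
    (h𝒯 : NucleusPre G r s k' 𝒯) (hR₀𝒮 : InKr G r 𝒮 R₀) (hR₀𝒯 : InKr G r 𝒯 R₀) :
    𝒯 ⊆ 𝒮 := by
  have hunion := h𝒮.2 _ (h𝒮.1.union hkk' h𝒯 hR₀𝒮 hR₀𝒯) Finset.subset_union_left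
  exact hunion ▸ Finset.subset_union_right

lemma IsNucleus.eq_of_inKr {R₀ : Finset V} (h𝒮 : IsNucleus G r s k 𝒮)
    (h𝒯 : IsNucleus G r s k 𝒯) (hR₀𝒮 : InKr G r 𝒮 R₀) (hR₀𝒯 : InKr G r 𝒯 R₀) : 𝒮 = 𝒯 :=
  (h𝒯.subset_of_inKr le_rfl h𝒮.1 hR₀𝒯 hR₀𝒮).antisymm
    (h𝒮.subset_of_inKr le_rfl h𝒯.1 hR₀𝒮 hR₀𝒯)

end

theorem nuclei_share_r_clique_general (G : SimpleGraph V) (r s k k' : ℕ)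
    (hkk' : k ≤ k')
    (𝒮 𝒮' : Finset (Finset V))
    (hS : IsNucleus G r s k 𝒮) (hS' : IsNucleus G r s k' 𝒮') :
    ((∃ R : Finset V, InKr G r 𝒮 R ∧ InKr G r 𝒮' R) → 𝒮' ⊆ 𝒮) ∧
    (∀ 𝒯 𝒯' : Finset (Finset V), IsNucleus G r s k 𝒯 → IsNucleus G r s k 𝒯' → 𝒯 ≠ 𝒯' →
      ∀ R : Finset V, ¬ (InKr G r 𝒯 R ∧ InKr G r 𝒯' R)) :=
  ⟨fun ⟨_, hR𝒮, hR𝒮'⟩ => hS.subset_of_inKr hkk' hS'.1 hR𝒮 hR𝒮',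
    fun _ _ hT hT' hne _ ⟨hR𝒯, hR𝒯'⟩ => hne (hT.eq_of_inKr hT' hR𝒯 hR𝒯')⟩

/-- Nuclei sharing an `r`-clique are nested; distinct nuclei at the same
level `k` share no `r`-clique. -/
theorem nuclei_share_r_clique (G : SimpleGraph V) (r s k k' : ℕ)
    (hr : 0 < r) (hrs : r < s) (hk : 0 < k) (hkk' : k ≤ k')
    (𝒮 𝒮' : Finset (Finset V))
    (hS : IsNucleus G r s k 𝒮) (hS' : IsNucleus G r s k' 𝒮') :
    ((∃ R : Finset V, InKr G r 𝒮 R ∧ InKr G r 𝒮' R) → 𝒮' ⊆ 𝒮) ∧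
    (∀ 𝒯 𝒯' : Finset (Finset V), IsNucleus G r s k 𝒯 → IsNucleus G r s k 𝒯' → 𝒯 ≠ 𝒯' →
      ∀ R : Finset V, ¬ (InKr G r 𝒯 R ∧ InKr G r 𝒯' R)) :=
  nuclei_share_r_clique_general G r s k k' hkk' 𝒮 𝒮' hS hS'
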